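/- arXiv:1606.00344 — 2 statements merged into one kernel-verified Lean document; each statement's English description precedes it below -/
import Mathlib

section
/- If a unitary representation of the Virasoro algebra with central charge c and highest weight vector Ψ of weight h exists (on a nontrivial complex inner product space with positive definite inner product), then c ≥ 0 and h ≥ 0. -/
open scoped InnerProductSpace

/-- If a unitary highest weight representation of the Virasoro algebra with
central charge `c` and a nonzero highest weight vector `Ψ` of weight `h` exists on a
complex inner product space, then `c ≥ 0` and `h ≥ 0`. -/
theorem central_charge_and_weight_nonneg
    (V : Type*) [NormedAddCommGroup V] [InnerProductSpace ℂ V]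
    (L : ℤ → V →ₗ[ℂ] V) (c h : ℝ)
    (hVir : ∀ n m : ℤ, L n ∘ₗ L m - L m ∘ₗ L n
      = ((n : ℂ) - (m : ℂ)) • L (n + m)
        + (if n = -m then ((c : ℂ) / 12) * ((n : ℂ) ^ 3 - (n : ℂ)) else 0)
            • (LinearMap.id : V →ₗ[ℂ] V))
    (hAdj : ∀ (n : ℤ) (u v : V), ⟪u, L n v⟫_ℂ = ⟪L (-n) u, v⟫_ℂ)
    (Ψ : V) (hΨne : Ψ ≠ 0)
    (hΨ0 : L 0 Ψ = (h : ℂ) • Ψ)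
    (hΨn : ∀ n : ℤ, 0 < n → L n Ψ = 0) :
    0 ≤ c ∧ 0 ≤ h := by
  have hΨpos : (0 : ℝ) < ‖Ψ‖ ^ 2 := by
    have := norm_pos_iff.mpr hΨne
    positivity
  have key : ∀ n : ℤ, 0 < n → 0 ≤ 2 * n * h + c / 12 * ((n : ℝ) ^ 3 - n) := by
    intro n hn
    have hLn : L n Ψ = 0 := hΨn n hn
    have hcomm := congrArg (fun f : V →ₗ[ℂ] V => f Ψ) (hVir n (-n))
    simp only [LinearMap.sub_apply, LinearMap.comp_apply, LinearMap.add_apply,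
      LinearMap.smul_apply, LinearMap.id_apply, if_pos (neg_neg n).symm,
      add_neg_cancel, hLn, map_zero, hΨ0] at hcomm
    -- hcomm : L n (L (-n) Ψ) - 0 = ((n:ℂ) - (-n:ℂ)) • ((h:ℂ) • Ψ) + (c/12 * (n^3 - n)) • Ψ
    have hval : L n (L (-n) Ψ)
        = ((2 * (n : ℂ) * (h : ℂ) + (c : ℂ) / 12 * ((n : ℂ) ^ 3 - (n : ℂ)))) • Ψ := by
      rw [sub_zero] at hcomm
      rw [hcomm, smul_smul, ← add_smul]
      congr 1
      push_cast
      ring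
    have hinner : ⟪L (-n) Ψ, L (-n) Ψ⟫_ℂ
        = ((2 * (n : ℂ) * (h : ℂ) + (c : ℂ) / 12 * ((n : ℂ) ^ 3 - (n : ℂ)))) * ⟪Ψ, Ψ⟫_ℂ := by
      rw [← hAdj n Ψ (L (-n) Ψ), hval, inner_smul_right]
    have h1 : (0 : ℝ) ≤ RCLike.re ⟪L (-n) Ψ, L (-n) Ψ⟫_ℂ := inner_self_nonneg
    rw [RCLike.re_to_complex, hinner] at h1
    have hre : ((2 * (n : ℂ) * (h : ℂ) + (c : ℂ) / 12 * ((n : ℂ) ^ 3 - (n : ℂ))) * ⟪Ψ, Ψ⟫_ℂ).re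
        = (2 * n * h + c / 12 * ((n : ℝ) ^ 3 - n)) * ‖Ψ‖ ^ 2 := by
      have : (2 * (n : ℂ) * (h : ℂ) + (c : ℂ) / 12 * ((n : ℂ) ^ 3 - (n : ℂ)))
          = ((2 * n * h + c / 12 * ((n : ℝ) ^ 3 - n) : ℝ) : ℂ) := by push_cast; ring
      rw [this, inner_self_eq_norm_sq_to_K]
      simp [← Complex.ofReal_pow, ← Complex.ofReal_mul]
    rw [hre] at h1
    nlinarith [h1, hΨpos]
  have hh : 0 ≤ h := by have := key 1 one_pos; push_cast at this; linarith
  refine ⟨?_, hh⟩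
  by_contra hc
  push_neg at hc
  obtain ⟨n, hn⟩ := exists_int_gt (max 1 (24 * h / (-c) + 1))
  have hn1 : (1 : ℝ) < n := lt_of_le_of_lt (le_max_left _ _) hn
  have hn0 : (0 : ℤ) < n := by exact_mod_cast lt_trans zero_lt_one hn1
  have hk := key n hn0
  have hb : 24 * h / (-c) + 1 < (n : ℝ) := lt_of_le_of_lt (le_max_right _ _) hn
  have hcpos : (0 : ℝ) < -c := by linarith
  have h2 : 24 * h / (-c) < (n : ℝ) ^ 2 - 1 := by
    nlinarith [sq_nonneg ((n : ℝ) - 1)]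
  have h3 : 24 * h < ((n : ℝ) ^ 2 - 1) * (-c) := by
    rw [div_lt_iff₀ hcpos] at h2; linarith
  nlinarith [hn1]
end

section
/- Let F, G : ℝ → ℂ be continuous functions which extend to continuous functions on the closed upper half-plane, analytic on the open upper half-plane, and suppose F(t) = G(t) for all t in some nonempty open interval (−ε, ε) ⊂ ℝ. Then F(t) = G(t) for all t ∈ ℝ. -/
/-!
The difference `Φ = F̃ - G̃` vanishes on a real interval `(a, b)`. Extended by zero to the lower
half-plane, `Φ` becomes continuous on the union of the upper half-plane and the vertical strip over
`(a, b)`, and holomorphic off the real axis. By Morera's theorem it is holomorphic there: a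
rectangle crossing the real axis splits into two rectangles whose interiors avoid it. Since it
vanishes on the lower half of the strip, the identity theorem makes it vanish everywhere, so
`Φ = 0` on the upper half-plane and, by continuity, on `ℝ`.
-/

open Set intervalIntegral
open scoped Interval

namespace Complex

variable {E : Type*} [NormedAddCommGroup E] [NormedSpace ℂ E]

theorem wedgeIntegral_add_wedgeIntegral_eq_add_of_mem_uIcc {f : ℂ → E} {z w : ℂ} {y : ℝ}
    (hf : ContinuousOn f (Rectangle z w)) (hy : y ∈ [[z.im, w.im]]) :
    wedgeIntegral z w f + wedgeIntegral w z f =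
      (wedgeIntegral z ⟨w.re, y⟩ f + wedgeIntegral ⟨w.re, y⟩ z f) +
        (wedgeIntegral ⟨z.re, y⟩ w f + wedgeIntegral w ⟨z.re, y⟩ f) := by
  have hvert : ∀ x ∈ [[z.re, w.re]], ∀ c d, [[c, d]] ⊆ [[z.im, w.im]] →
      IntervalIntegrable (fun s : ℝ ↦ f (x + s * I)) MeasureTheory.volume c d := by
    intro x hx c d hcd
    refine (hf.comp (by fun_prop) fun s hs ↦ ?_).intervalIntegrable
    simpa [Rectangle, mem_reProdIm] using ⟨hx, hcd hs⟩
  simp only [wedgeIntegral_add_wedgeIntegral_eq]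
  rw [← integral_add_adjacent_intervals
      (hvert _ right_mem_uIcc _ _ (uIcc_subset_uIcc left_mem_uIcc hy))
      (hvert _ right_mem_uIcc _ _ (uIcc_subset_uIcc_right hy)),
    ← integral_add_adjacent_intervals
      (hvert _ left_mem_uIcc _ _ (uIcc_subset_uIcc left_mem_uIcc hy))
      (hvert _ left_mem_uIcc _ _ (uIcc_subset_uIcc_right hy))]
  simp only [smul_add]
  abel

theorem wedgeIntegral_add_wedgeIntegral_eq_zero_of_zero_notMem {f : ℂ → E} {U : Set ℂ} {z w : ℂ}
    (hf : ContinuousOn f U) (hd : DifferentiableOn ℂ f {z ∈ U | z.im ≠ 0})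
    (hzw : Rectangle z w ⊆ U) (h0 : (0 : ℝ) ∉ Ioo (min z.im w.im) (max z.im w.im)) :
    wedgeIntegral z w f + wedgeIntegral w z f = 0 := by
  rw [wedgeIntegral_add_wedgeIntegral_eq]
  refine integral_boundary_rect_eq_zero_of_continuousOn_of_differentiableOn f z w (hf.mono hzw)
    (hd.mono fun p hp ↦ ⟨hzw ?_, fun hp0 ↦ h0 (hp0 ▸ hp.2)⟩)
  exact ⟨Ioo_subset_Icc_self hp.1, Ioo_subset_Icc_self hp.2⟩

variable [CompleteSpace E]

theorem differentiableOn_of_continuousOn_of_differentiableOn_im_ne_zero {f : ℂ → E} {U : Set ℂ}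
    (hU : IsOpen U) (hf : ContinuousOn f U) (hd : DifferentiableOn ℂ f {z ∈ U | z.im ≠ 0}) :
    DifferentiableOn ℂ f U := by
  refine (isConservativeOn_and_continuousOn_iff_isDifferentiableOn hU).1 ⟨fun z w hzw ↦ ?_, hf⟩
  rw [← add_eq_zero_iff_eq_neg]
  by_cases h0 : (0 : ℝ) ∈ Ioo (min z.im w.im) (max z.im w.im)
  · have h0' : (0 : ℝ) ∈ [[z.im, w.im]] := Ioo_subset_Icc_self h0
    have hsub : ∀ c d, [[c, d]] ⊆ [[z.im, w.im]] → Rectangle ⟨z.re, c⟩ ⟨w.re, d⟩ ⊆ U :=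
      fun c d hcd ↦ (reProdIm_subset_iff'.2 (.inl ⟨subset_rfl, hcd⟩)).trans hzw
    rw [wedgeIntegral_add_wedgeIntegral_eq_add_of_mem_uIcc (hf.mono hzw) h0',
      wedgeIntegral_add_wedgeIntegral_eq_zero_of_zero_notMem hf hd
        (hsub _ _ (uIcc_subset_uIcc left_mem_uIcc h0')) (by simpa using le_of_lt),
      wedgeIntegral_add_wedgeIntegral_eq_zero_of_zero_notMem hf hd
        (hsub _ _ (uIcc_subset_uIcc_right h0')) (by simpa using le_of_lt), add_zero]
  · exact wedgeIntegral_add_wedgeIntegral_eq_zero_of_zero_notMem hf hd hzw h0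

theorem differentiableOn_ite_of_eq_zero_on_Ioo {f : ℂ → E} {a b : ℝ}
    (hf : ContinuousOn f {z | 0 ≤ z.im}) (hd : DifferentiableOn ℂ f {z | 0 < z.im})
    (h0 : ∀ t ∈ Ioo a b, f t = 0) :
    DifferentiableOn ℂ (fun z ↦ if 0 ≤ z.im then f z else 0)
      ({z | 0 < z.im} ∪ re ⁻¹' Ioo a b) := by
  have hV : IsOpen ({z : ℂ | 0 < z.im} ∪ re ⁻¹' Ioo a b) :=
    (isOpen_lt continuous_const continuous_im).union (isOpen_Ioo.preimage continuous_re)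
  refine differentiableOn_of_continuousOn_of_differentiableOn_im_ne_zero hV ?_ ?_
  · refine ContinuousOn.if (fun z ⟨hzV, hz⟩ ↦ ?_) (hf.mono fun z hz ↦ ?_) continuousOn_const
    · rw [frontier_setOfPred_le_im] at hz
      have hzab : z.re ∈ Ioo a b := hzV.resolve_left (show z.im = 0 from hz).not_gt
      rw [show z = z.re from ext rfl hz]
      exact h0 _ hzab
    · exact (isClosed_le continuous_const continuous_im).closure_subset hz.2
  · rintro z ⟨-, hz⟩
    rcases hz.lt_or_gt with hz | hz
    · refine ((differentiableAt_const (0 : E)).congr_of_eventuallyEq ?_).differentiableWithinAt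
      filter_upwards [(isOpen_lt continuous_im continuous_const).mem_nhds hz] with w hw
      simp [not_le.2 (show w.im < 0 from hw)]
    · have hU := (isOpen_lt continuous_const continuous_im).mem_nhds hz
      refine ((hd.differentiableAt hU).congr_of_eventuallyEq ?_).differentiableWithinAt
      filter_upwards [hU] with w hw
      simp [(show 0 < w.im from hw).le]

theorem eqOn_zero_of_eq_zero_on_Ioo {f : ℂ → E} {a b : ℝ} (hab : a < b)
    (hf : ContinuousOn f {z | 0 ≤ z.im}) (hd : DifferentiableOn ℂ f {z | 0 < z.im})
    (h0 : ∀ t ∈ Ioo a b, f t = 0) :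
    EqOn f 0 {z | 0 ≤ z.im} := by
  obtain ⟨c, hc⟩ := nonempty_Ioo.2 hab
  have hV : IsPreconnected ({z : ℂ | 0 < z.im} ∪ re ⁻¹' Ioo a b) :=
    (convex_halfSpace_im_gt 0).isPreconnected.union (c + I) (by simp) (by simpa using hc)
      ((convex_halfSpace_re_gt a).inter (convex_halfSpace_re_lt b)).isPreconnected
  have hext := (differentiableOn_ite_of_eq_zero_on_Ioo hf hd h0).analyticOnNhd
    ((isOpen_lt continuous_const continuous_im).union (isOpen_Ioo.preimage continuous_re))
  have hzero := hext.eqOn_zero_of_preconnected_of_eventuallyEq_zero hV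
    (z₀ := c - I) (.inr (by simpa using hc)) ?_
  · refine EqOn.of_subset_closure (fun z hz ↦ ?_) hf continuousOn_const
      (fun z (hz : 0 < z.im) ↦ hz.le) (closure_setOfPred_lt_im 0).ge
    simpa [(show 0 < z.im from hz).le] using hzero (.inl hz)
  · filter_upwards [(isOpen_lt continuous_im continuous_const).mem_nhds
      (show (c - I).im < 0 by simp)] with w hw
    simp [not_le.2 (show w.im < 0 from hw)]

end Complex

/-- If `F, G : ℝ → ℂ` are boundary values of functions continuous on the
closed upper half-plane and holomorphic on the open upper half-plane, and `F = G` on some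
nonempty interval `(−ε, ε)`, then `F = G` on all of `ℝ`. -/
theorem boundary_values_agree_of_agree_on_interval
    (F G : ℝ → ℂ) (Ft Gt : ℂ → ℂ)
    (hFc : ContinuousOn Ft {z : ℂ | 0 ≤ z.im})
    (hFa : DifferentiableOn ℂ Ft {z : ℂ | 0 < z.im})
    (hFb : ∀ t : ℝ, Ft (t : ℂ) = F t)
    (hGc : ContinuousOn Gt {z : ℂ | 0 ≤ z.im})
    (hGa : DifferentiableOn ℂ Gt {z : ℂ | 0 < z.im})
    (hGb : ∀ t : ℝ, Gt (t : ℂ) = G t)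
    (ε : ℝ) (hε : 0 < ε)
    (heq : ∀ t ∈ Set.Ioo (-ε) ε, F t = G t) :
    ∀ t : ℝ, F t = G t := by
  have hdiff := Complex.eqOn_zero_of_eq_zero_on_Ioo (neg_lt_self hε) (hFc.sub hGc) (hFa.sub hGa)
    fun t ht ↦ by simp [hFb, hGb, heq t ht]
  intro t
  simpa [hFb, hGb, sub_eq_zero] using hdiff (show 0 ≤ (t : ℂ).im by simp)
end
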